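/- arXiv:1903.12455 — 7 statements merged into one kernel-verified Lean document; each statement's English description precedes it below -/
import Mathlib

section
/- Forward direction of Wall's theorem: If a : ℕ → ℝ is a Hausdorff moment sequence with a_0 = 1, then there exist real numbers g_1, g_2, g_3, ... all lying in [0,1] such that Σ_{n≥0} a_n t^n is represented, in the sense of formal power series, by the S-fraction with coefficients α_0 = 1, α_1 = g_1, and α_n = (1 − g_{n−1}) g_n for n ≥ 2. -/
/-!
Symmetrising `μ` gives the functional `L p = ∫ (p(√y) + p(-√y)) / 2 dμ(y)` on `ℝ[X]`: it is even,
`L (X ^ (2 n)) = a n`, and it is nonnegative on `p ^ 2` and on `(1 - X) p ^ 2`. Because `L` is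
even, its monic orthogonal polynomials satisfy `X φ_k = φ_{k+1} + γ_k φ_{k-1}` with
`γ_k = h_k / h_{k-1}`, `h_k = L (φ_k ^ 2)`. Expanding `L (X ^ m φ_j)` along this recurrence
reproduces the coefficients of `t ^ j G_0 ⋯ G_j`, where `G_i (t) = F_i (t ^ 2)` and the `F_i` are
the tails of the S-fraction with coefficients `γ`; for `j = 0` this says that `∑ a_n t ^ n` is that
S-fraction. Positivity against `1 - X` puts `γ` in Wall's form: with `τ_k = L ((1 - X) w_k ^ 2)`
for suitable `w_k = φ_k + (lower terms)`, one gets `τ_k = h_k (1 - g_k) ≥ 0` for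
`g_k = h_k / τ_{k-1} ≥ 0`, hence `g_k ∈ [0, 1]` and `γ_{k+1} = (1 - g_k) g_{k+1}`. Vanishing norms
(finitely supported `μ`) are handled by the degenerate case of Cauchy–Schwarz.
-/

noncomputable section

section Functional

open Polynomial

lemma LinearMap.apply_C_mul {R : Type*} [CommSemiring R] (L : R[X] →ₗ[R] R) (c : R) (p : R[X]) :
    L (C c * p) = c * L p := by
  rw [← smul_eq_C_mul, map_smul, smul_eq_mul]

variable {K : Type*} [Field K] [LinearOrder K] [IsStrictOrderedRing K] {L : K[X] →ₗ[K] K}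

/-- Cauchy–Schwarz in the degenerate case: `t ↦ L (W * (q + t p) ^ 2)` is affine and
nonnegative, so its slope vanishes. -/
lemma apply_mul_eq_zero_of_apply_mul_self_eq_zero {W p : K[X]} (hW : ∀ q, 0 ≤ L (W * q * q))
    (hp : L (W * p * p) = 0) (q : K[X]) : L (W * p * q) = 0 := by
  have hquad : ∀ t : K, 0 ≤ 0 * (t * t) + 2 * L (W * p * q) * t + L (W * q * q) := fun t => by
    have hexp : W * (q + C t * p) * (q + C t * p) =
        W * q * q + C (2 * t) * (W * p * q) + C (t * t) * (W * p * p) := by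
      simp only [C_mul, C_ofNat]; ring
    have := hW (q + C t * p)
    rw [hexp, map_add, map_add, L.apply_C_mul, L.apply_C_mul, hp] at this
    linarith
  have hdisc := discrim_le_zero hquad
  rw [discrim] at hdisc
  nlinarith [sq_nonneg (L (W * p * q))]

lemma apply_eq_zero_of_comp_neg_X (heven : ∀ p, L (p.comp (-X)) = L p) {q : K[X]}
    (hq : q.comp (-X) = -q) : L q = 0 := by
  have := heven q
  rw [hq, map_neg] at this
  linarith

end Functional

section OrthoPoly

open Polynomial

variable {K : Type*} [Field K] {L : K[X] →ₗ[K] K}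

def orthoPoly (L : K[X] →ₗ[K] K) : ℕ → K[X]
  | 0 => 1
  | 1 => X
  | k + 2 => X * orthoPoly L (k + 1) -
      C (L (orthoPoly L (k + 1) * orthoPoly L (k + 1)) / L (orthoPoly L k * orthoPoly L k)) *
        orthoPoly L k

def orthoNormSq (L : K[X] →ₗ[K] K) (k : ℕ) : K := L (orthoPoly L k * orthoPoly L k)

/-- `γ_0 = 0` makes `X_mul_orthoPoly` hold at `k = 0` too, where `k - 1` truncates to `0`. -/
def orthoRecCoeff (L : K[X] →ₗ[K] K) : ℕ → K
  | 0 => 0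
  | k + 1 => orthoNormSq L (k + 1) / orthoNormSq L k

lemma orthoPoly_succ : ∀ k, orthoPoly L (k + 1) =
    X * orthoPoly L k - C (orthoRecCoeff L k) * orthoPoly L (k - 1)
  | 0 => by simp [orthoPoly, orthoRecCoeff]
  | _ + 1 => rfl

lemma X_mul_orthoPoly (k : ℕ) :
    X * orthoPoly L k = orthoPoly L (k + 1) + C (orthoRecCoeff L k) * orthoPoly L (k - 1) := by
  rw [orthoPoly_succ]; ring

lemma orthoPoly_comp_neg_X : ∀ k, (orthoPoly L k).comp (-X) = (-1) ^ k * orthoPoly L k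
  | 0 => by simp [orthoPoly]
  | 1 => by simp [orthoPoly]
  | k + 2 => by
    rw [orthoPoly_succ, sub_comp, mul_comp, mul_comp, X_comp, C_comp, Nat.add_sub_cancel,
      orthoPoly_comp_neg_X (k + 1), orthoPoly_comp_neg_X k]
    ring

variable [LinearOrder K] [IsStrictOrderedRing K]

lemma apply_orthoPoly_mul_X_mul_orthoPoly_self (heven : ∀ p, L (p.comp (-X)) = L p) (k : ℕ) :
    L (orthoPoly L k * (X * orthoPoly L k)) = 0 := by
  refine apply_eq_zero_of_comp_neg_X heven ?_
  have hsq : ((-1 : K[X]) ^ k) * (-1) ^ k = 1 := by rw [← mul_pow]; simp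
  rw [mul_comp, mul_comp, X_comp, orthoPoly_comp_neg_X]
  linear_combination (-(orthoPoly L k * (X * orthoPoly L k))) * hsq

lemma orthoRecCoeff_succ_mul_orthoNormSq_of_orthogonal (hpos : ∀ p, 0 ≤ L (p * p)) (k : ℕ)
    (hortho : ∀ j < k + 1, L (orthoPoly L j * orthoPoly L (k + 1)) = 0) :
    orthoRecCoeff L (k + 1) * orthoNormSq L k = orthoNormSq L (k + 1) := by
  by_cases hk : orthoNormSq L k = 0
  · have hnull : ∀ q, L (1 * orthoPoly L k * q) = 0 :=
      apply_mul_eq_zero_of_apply_mul_self_eq_zero (by simpa using hpos) (by rw [one_mul]; exact hk)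
    have : orthoNormSq L (k + 1) = 0 := by
      calc orthoNormSq L (k + 1)
          = L (1 * orthoPoly L k * (X * orthoPoly L (k + 1))) -
              orthoRecCoeff L k * L (orthoPoly L (k - 1) * orthoPoly L (k + 1)) := by
            rw [← L.apply_C_mul, ← map_sub, orthoNormSq]
            nth_rewrite 1 [orthoPoly_succ]
            ring_nf
        _ = 0 := by rw [hnull, hortho (k - 1) (by omega)]; ring
    rw [hk, this, mul_zero]
  · exact div_mul_cancel₀ _ hk

theorem apply_orthoPoly_mul_orthoPoly_of_lt (hpos : ∀ p, 0 ≤ L (p * p))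
    (heven : ∀ p, L (p.comp (-X)) = L p) {j k : ℕ} (hjk : j < k) :
    L (orthoPoly L j * orthoPoly L k) = 0 := by
  induction k using Nat.strong_induction_on generalizing j with
  | _ k ih =>
  match k, hjk with
  | 1, _ =>
    obtain rfl : j = 0 := by omega
    simpa [orthoPoly] using apply_eq_zero_of_comp_neg_X heven (q := X) (by simp)
  | k + 2, _ =>
    have hexp : L (orthoPoly L j * orthoPoly L (k + 2)) =
        L (orthoPoly L (j + 1) * orthoPoly L (k + 1)) +
          orthoRecCoeff L j * L (orthoPoly L (j - 1) * orthoPoly L (k + 1)) -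
          orthoRecCoeff L (k + 1) * L (orthoPoly L j * orthoPoly L k) := by
      rw [← L.apply_C_mul, ← L.apply_C_mul, ← map_add, ← map_sub, ← mul_assoc, ← add_mul,
        ← X_mul_orthoPoly, orthoPoly_succ (k + 1), Nat.add_sub_cancel]
      ring_nf
    rcases (show j < k ∨ j = k ∨ j = k + 1 by omega) with hj | rfl | rfl
    · rw [hexp, ih (k + 1) (by omega) (j := j + 1) (by omega),
        ih (k + 1) (by omega) (j := j - 1) (by omega), ih k (by omega) hj]
      ring
    · have hrec := orthoRecCoeff_succ_mul_orthoNormSq_of_orthogonal hpos j fun i hi =>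
        ih (j + 1) (by omega) hi
      rw [hexp, ih (j + 1) (by omega) (j := j - 1) (by omega)]
      unfold orthoNormSq at hrec
      linear_combination -hrec
    · rw [orthoPoly_succ (k + 1), Nat.add_sub_cancel, mul_sub, map_sub, mul_left_comm _ (C _),
        L.apply_C_mul, apply_orthoPoly_mul_X_mul_orthoPoly_self heven, mul_comm (orthoPoly L _),
        ih (k + 1) (by omega) (by omega)]
      ring

lemma orthoRecCoeff_succ_mul_orthoNormSq (hpos : ∀ p, 0 ≤ L (p * p))
    (heven : ∀ p, L (p.comp (-X)) = L p) (k : ℕ) :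
    orthoRecCoeff L (k + 1) * orthoNormSq L k = orthoNormSq L (k + 1) :=
  orthoRecCoeff_succ_mul_orthoNormSq_of_orthogonal hpos k fun _ hj =>
    apply_orthoPoly_mul_orthoPoly_of_lt hpos heven hj

end OrthoPoly

section WallPoly

open Polynomial

variable {K : Type*} [Field K] {L : K[X] →ₗ[K] K}

/-- The coefficient `h_{k+1} / τ_k` of `w_k` minimises `t ↦ L ((1 - X) (φ_{k+1} + t w_k) ^ 2)`. -/
def wallPoly (L : K[X] →ₗ[K] K) : ℕ → K[X]
  | 0 => 1
  | k + 1 => orthoPoly L (k + 1) +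
      C (orthoNormSq L (k + 1) / L ((1 - X) * wallPoly L k * wallPoly L k)) * wallPoly L k

def wallNormSq (L : K[X] →ₗ[K] K) (k : ℕ) : K := L ((1 - X) * wallPoly L k * wallPoly L k)

def wallParam (L : K[X] →ₗ[K] K) (n : ℕ) : K := orthoNormSq L n / wallNormSq L (n - 1)

lemma wallPoly_succ (k : ℕ) :
    wallPoly L (k + 1) = orthoPoly L (k + 1) + C (wallParam L (k + 1)) * wallPoly L k := rfl

variable [LinearOrder K] [IsStrictOrderedRing K]

lemma apply_orthoPoly_mul_wallPoly_of_lt (hpos : ∀ p, 0 ≤ L (p * p))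
    (heven : ∀ p, L (p.comp (-X)) = L p) {k m : ℕ} (hkm : k < m) :
    L (orthoPoly L m * wallPoly L k) = 0 := by
  induction k with
  | zero => simpa [wallPoly, orthoPoly] using apply_orthoPoly_mul_orthoPoly_of_lt hpos heven hkm
  | succ k ih =>
    rw [wallPoly_succ, mul_add, map_add, mul_left_comm, L.apply_C_mul, ih (by omega), mul_comm,
      apply_orthoPoly_mul_orthoPoly_of_lt hpos heven hkm]
    ring

lemma apply_orthoPoly_mul_wallPoly_self (hpos : ∀ p, 0 ≤ L (p * p))
    (heven : ∀ p, L (p.comp (-X)) = L p) :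
    ∀ k, L (orthoPoly L k * wallPoly L k) = orthoNormSq L k
  | 0 => rfl
  | k + 1 => by
    rw [wallPoly_succ, mul_add, map_add, mul_left_comm, L.apply_C_mul,
      apply_orthoPoly_mul_wallPoly_of_lt hpos heven (Nat.lt_succ_self k), orthoNormSq]
    ring

lemma apply_one_sub_X_mul_orthoPoly_mul_wallPoly (hpos : ∀ p, 0 ≤ L (p * p))
    (heven : ∀ p, L (p.comp (-X)) = L p) (k : ℕ) :
    L ((1 - X) * orthoPoly L (k + 1) * wallPoly L k) = -orthoNormSq L (k + 1) := by
  have hX : L (X * orthoPoly L (k + 1) * wallPoly L k) = orthoNormSq L (k + 1) := by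
    rw [X_mul_orthoPoly, add_mul, map_add, mul_assoc, L.apply_C_mul, Nat.add_sub_cancel,
      apply_orthoPoly_mul_wallPoly_of_lt hpos heven (by omega),
      apply_orthoPoly_mul_wallPoly_self hpos heven, orthoRecCoeff_succ_mul_orthoNormSq hpos heven,
      zero_add]
  rw [sub_mul, sub_mul, map_sub, hX, one_mul,
    apply_orthoPoly_mul_wallPoly_of_lt hpos heven (Nat.lt_succ_self k), zero_sub]

lemma wallNormSq_zero (heven : ∀ p, L (p.comp (-X)) = L p) : wallNormSq L 0 = L 1 := by
  rw [wallNormSq, wallPoly, mul_one, mul_one, map_sub,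
    apply_eq_zero_of_comp_neg_X heven (q := X) (by simp), sub_zero]

lemma orthoNormSq_succ_eq_zero_of_wallNormSq_eq_zero (hpos : ∀ p, 0 ≤ L (p * p))
    (hpos' : ∀ p, 0 ≤ L ((1 - X) * p * p)) (heven : ∀ p, L (p.comp (-X)) = L p) {k : ℕ}
    (hk : wallNormSq L k = 0) : orthoNormSq L (k + 1) = 0 := by
  have := apply_mul_eq_zero_of_apply_mul_self_eq_zero hpos' hk (orthoPoly L (k + 1))
  rw [mul_right_comm, apply_one_sub_X_mul_orthoPoly_mul_wallPoly hpos heven] at this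
  linarith

lemma wallParam_succ_mul_wallNormSq (hpos : ∀ p, 0 ≤ L (p * p))
    (hpos' : ∀ p, 0 ≤ L ((1 - X) * p * p)) (heven : ∀ p, L (p.comp (-X)) = L p) (k : ℕ) :
    wallParam L (k + 1) * wallNormSq L k = orthoNormSq L (k + 1) := by
  rw [wallParam, Nat.add_sub_cancel]
  by_cases hk : wallNormSq L k = 0
  · rw [hk, orthoNormSq_succ_eq_zero_of_wallNormSq_eq_zero hpos hpos' heven hk]; simp
  · exact div_mul_cancel₀ _ hk

lemma wallNormSq_succ (hpos : ∀ p, 0 ≤ L (p * p))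
    (hpos' : ∀ p, 0 ≤ L ((1 - X) * p * p)) (heven : ∀ p, L (p.comp (-X)) = L p) (k : ℕ) :
    wallNormSq L (k + 1) = orthoNormSq L (k + 1) * (1 - wallParam L (k + 1)) := by
  set g := wallParam L (k + 1)
  have hexp : (1 - X) * wallPoly L (k + 1) * wallPoly L (k + 1) =
      orthoPoly L (k + 1) * orthoPoly L (k + 1) - orthoPoly L (k + 1) * (X * orthoPoly L (k + 1)) +
        C (2 * g) * ((1 - X) * orthoPoly L (k + 1) * wallPoly L k) +
        C (g * g) * ((1 - X) * wallPoly L k * wallPoly L k) := by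
    rw [wallPoly_succ, C_mul, C_mul, C_ofNat]; ring
  have hrec := wallParam_succ_mul_wallNormSq hpos hpos' heven k
  rw [wallNormSq, hexp, map_add, map_add, map_sub, L.apply_C_mul, L.apply_C_mul,
    apply_orthoPoly_mul_X_mul_orthoPoly_self heven,
    apply_one_sub_X_mul_orthoPoly_mul_wallPoly hpos heven,
    ← wallNormSq]
  unfold orthoNormSq at hrec ⊢
  linear_combination g * hrec

lemma wallParam_succ_mem_Icc (hpos : ∀ p, 0 ≤ L (p * p))
    (hpos' : ∀ p, 0 ≤ L ((1 - X) * p * p)) (heven : ∀ p, L (p.comp (-X)) = L p) (k : ℕ) :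
    wallParam L (k + 1) ∈ Set.Icc 0 1 := by
  have hg : 0 ≤ wallParam L (k + 1) := div_nonneg (hpos _) (hpos' _)
  refine ⟨hg, ?_⟩
  rcases (hpos (orthoPoly L (k + 1))).eq_or_lt with hh | hh
  · rw [wallParam, show orthoNormSq L (k + 1) = 0 from hh.symm, zero_div]; exact zero_le_one
  · have : 0 ≤ wallNormSq L (k + 1) := hpos' _
    rw [wallNormSq_succ hpos hpos' heven] at this
    change 0 < orthoNormSq L (k + 1) at hh
    nlinarith

lemma orthoRecCoeff_one (heven : ∀ p, L (p.comp (-X)) = L p) :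
    orthoRecCoeff L 1 = wallParam L 1 := by
  rw [orthoRecCoeff, wallParam, Nat.sub_self, wallNormSq_zero heven]
  simp [orthoNormSq, orthoPoly]

lemma orthoRecCoeff_succ_succ (hpos : ∀ p, 0 ≤ L (p * p))
    (hpos' : ∀ p, 0 ≤ L ((1 - X) * p * p)) (heven : ∀ p, L (p.comp (-X)) = L p) (k : ℕ) :
    orthoRecCoeff L (k + 2) = (1 - wallParam L (k + 1)) * wallParam L (k + 2) := by
  have hrec := wallParam_succ_mul_wallNormSq hpos hpos' heven (k + 1)
  rw [wallNormSq_succ hpos hpos' heven] at hrec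
  rw [orthoRecCoeff]
  by_cases hk : wallNormSq L (k + 1) = 0
  · have h0 := orthoNormSq_succ_eq_zero_of_wallNormSq_eq_zero hpos hpos' heven hk
    simp [wallParam, h0]
  · rw [wallNormSq_succ hpos hpos' heven] at hk
    have h1 : orthoNormSq L (k + 1) ≠ 0 := left_ne_zero_of_mul hk
    rw [← hrec]
    field_simp

end WallPoly

section SFraction

open PowerSeries

variable {R : Type*} [CommRing R] (c : ℕ → R)

def sfracCoeff : ℕ → ℕ → R
  | 0, _ => 1
  | n + 1, k => c (k + 1) * ∑ i : Fin (n + 1), sfracCoeff i (k + 1) * sfracCoeff (n - i) k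
decreasing_by all_goals have := i.isLt; omega

def sfracTail (k : ℕ) : R⟦X⟧ := mk fun n => sfracCoeff c n k

lemma sfracTail_eq (k : ℕ) :
    sfracTail c k = 1 + C (c (k + 1)) * X * (sfracTail c (k + 1) * sfracTail c k) := by
  ext (_ | n)
  · simp [sfracTail, sfracCoeff]
  · rw [map_add, mul_assoc, coeff_C_mul, coeff_succ_X_mul, coeff_one, if_neg n.succ_ne_zero,
      coeff_mul, Finset.Nat.sum_antidiagonal_eq_sum_range_succ_mk, ← Fin.sum_univ_eq_sum_range]
    simp [sfracTail, sfracCoeff]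

lemma sfracTail_mul_one_sub (k : ℕ) :
    sfracTail c k * (1 - C (c (k + 1)) * X * sfracTail c (k + 1)) = 1 := by
  linear_combination sfracTail_eq c k

lemma expand_sfracTail (k : ℕ) :
    expand 2 two_ne_zero (sfracTail c k) = 1 + C (c (k + 1)) * X ^ 2 *
      (expand 2 two_ne_zero (sfracTail c (k + 1)) * expand 2 two_ne_zero (sfracTail c k)) := by
  conv_lhs => rw [sfracTail_eq]
  simp only [map_add, map_mul, map_one, expand_C, expand_X]

/-- The generating function of `c`-weighted lattice paths from height `0` to height `j`. -/
def sfracPathSeries (j : ℕ) : R⟦X⟧ :=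
  X ^ j * ∏ i ∈ Finset.range (j + 1), expand 2 two_ne_zero (sfracTail c i)

lemma sfracPathSeries_zero : sfracPathSeries c 0 = expand 2 two_ne_zero (sfracTail c 0) := by
  simp [sfracPathSeries]

lemma sfracPathSeries_eq (j : ℕ) :
    sfracPathSeries c j = (if j = 0 then 1 else X * sfracPathSeries c (j - 1)) +
      C (c (j + 1)) * X * sfracPathSeries c (j + 1) := by
  rcases j with _ | j
  · simp only [sfracPathSeries, Finset.prod_range_succ, Finset.prod_range_zero, if_pos]
    linear_combination expand_sfracTail c 0
  · simp only [sfracPathSeries, Finset.prod_range_succ, if_neg j.succ_ne_zero, Nat.add_sub_cancel]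
    linear_combination (X ^ (j + 1) *
      (∏ i ∈ Finset.range j, expand 2 two_ne_zero (sfracTail c i)) *
      expand 2 two_ne_zero (sfracTail c j)) * expand_sfracTail c (j + 1)

lemma coeff_succ_sfracPathSeries (m j : ℕ) :
    coeff (m + 1) (sfracPathSeries c j) =
      (if j = 0 then 0 else coeff m (sfracPathSeries c (j - 1))) +
      c (j + 1) * coeff m (sfracPathSeries c (j + 1)) := by
  conv_lhs => rw [sfracPathSeries_eq]
  split_ifs <;> simp [mul_assoc, coeff_succ_X_mul]

lemma coeff_zero_sfracPathSeries (j : ℕ) :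
    coeff 0 (sfracPathSeries c j) = if j = 0 then 1 else 0 := by
  rw [sfracPathSeries_eq]
  split_ifs <;> simp [mul_assoc]

end SFraction

section Moments

open Polynomial

variable {K : Type*} [Field K] [LinearOrder K] [IsStrictOrderedRing K] {L : K[X] →ₗ[K] K}

theorem apply_X_pow_mul_orthoPoly (hpos : ∀ p, 0 ≤ L (p * p))
    (heven : ∀ p, L (p.comp (-X)) = L p) {c : ℕ → K}
    (hc : ∀ k, c (k + 1) = orthoRecCoeff L (k + 1)) (m j : ℕ) :
    L (X ^ m * orthoPoly L j) = PowerSeries.coeff m (sfracPathSeries c j) * orthoNormSq L j := by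
  induction m generalizing j with
  | zero =>
    rw [pow_zero, one_mul, coeff_zero_sfracPathSeries]
    rcases j with _ | j
    · simp [orthoNormSq, orthoPoly]
    · simpa [orthoPoly] using apply_orthoPoly_mul_orthoPoly_of_lt hpos heven j.succ_pos
  | succ m ih =>
    rw [pow_succ, mul_assoc, X_mul_orthoPoly, mul_add, map_add, mul_left_comm, L.apply_C_mul, ih,
      ih, coeff_succ_sfracPathSeries, hc]
    rcases j with _ | j
    · rw [if_pos rfl, show orthoRecCoeff L 0 = 0 from rfl]
      linear_combination (-PowerSeries.coeff m (sfracPathSeries c 1)) *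
        orthoRecCoeff_succ_mul_orthoNormSq hpos heven 0
    · rw [if_neg j.succ_ne_zero, Nat.add_sub_cancel]
      linear_combination (-PowerSeries.coeff m (sfracPathSeries c (j + 2))) *
          orthoRecCoeff_succ_mul_orthoNormSq hpos heven (j + 1) +
        PowerSeries.coeff m (sfracPathSeries c j) * orthoRecCoeff_succ_mul_orthoNormSq hpos heven j

theorem apply_X_pow_two_mul_eq_coeff_sfracTail (hpos : ∀ p, 0 ≤ L (p * p))
    (heven : ∀ p, L (p.comp (-X)) = L p) {c : ℕ → K}
    (hc : ∀ k, c (k + 1) = orthoRecCoeff L (k + 1)) (n : ℕ) :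
    L (X ^ (2 * n)) = PowerSeries.coeff n (sfracTail c 0) * L 1 := by
  simpa [sfracPathSeries_zero, orthoNormSq, orthoPoly] using
    apply_X_pow_mul_orthoPoly hpos heven hc (2 * n) 0

end Moments

section Measure

open MeasureTheory Polynomial

variable (μ : Measure ℝ) [IsFiniteMeasure μ]

lemma integrableOn_eval_sqrt_add_eval_neg_sqrt (p : ℝ[X]) :
    IntegrableOn (fun y => (p.eval √y + p.eval (-√y)) / 2) (Set.Icc 0 1) μ :=
  Continuous.integrableOn_Icc (by fun_prop)

/-- Integration against the image of `μ` under `y ↦ ±√y`, a symmetric measure on `[-1, 1]`. -/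
def evenMomentFunctional : ℝ[X] →ₗ[ℝ] ℝ where
  toFun p := ∫ y in Set.Icc 0 1, (p.eval √y + p.eval (-√y)) / 2 ∂μ
  map_add' p q := by
    rw [← integral_add (integrableOn_eval_sqrt_add_eval_neg_sqrt μ p)
      (integrableOn_eval_sqrt_add_eval_neg_sqrt μ q)]
    simp only [eval_add]
    congr 1; ext y; ring
  map_smul' a p := by
    rw [RingHom.id_apply, smul_eq_mul, ← integral_const_mul]
    simp only [eval_smul, smul_eq_mul]
    congr 1; ext y; ring

lemma evenMomentFunctional_apply (p : ℝ[X]) :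
    evenMomentFunctional μ p = ∫ y in Set.Icc 0 1, (p.eval √y + p.eval (-√y)) / 2 ∂μ :=
  rfl

lemma evenMomentFunctional_comp_neg_X (p : ℝ[X]) :
    evenMomentFunctional μ (p.comp (-X)) = evenMomentFunctional μ p := by
  simp only [evenMomentFunctional_apply, eval_comp, eval_neg, eval_X, neg_neg, add_comm]

lemma evenMomentFunctional_mul_self_nonneg (p : ℝ[X]) : 0 ≤ evenMomentFunctional μ (p * p) :=
  setIntegral_nonneg measurableSet_Icc fun y _ => by
    simp only [eval_mul]
    nlinarith [mul_self_nonneg (p.eval √y), mul_self_nonneg (p.eval (-√y))]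

lemma evenMomentFunctional_one_sub_X_mul_self_nonneg (p : ℝ[X]) :
    0 ≤ evenMomentFunctional μ ((1 - X) * p * p) :=
  setIntegral_nonneg measurableSet_Icc fun y hy => by
    have hs : √y ≤ 1 := Real.sqrt_le_one.mpr hy.2
    have hs' : 0 ≤ √y := Real.sqrt_nonneg y
    simp only [eval_mul, eval_sub, eval_one, eval_X]
    nlinarith [mul_nonneg (sub_nonneg.mpr hs) (mul_self_nonneg (p.eval √y)),
      mul_nonneg (add_nonneg zero_le_one hs') (mul_self_nonneg (p.eval (-√y)))]

lemma evenMomentFunctional_X_pow_two_mul (n : ℕ) :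
    evenMomentFunctional μ (X ^ (2 * n)) = ∫ y in Set.Icc 0 1, y ^ n ∂μ := by
  refine setIntegral_congr_fun measurableSet_Icc fun y hy => ?_
  simp only [eval_pow, eval_X, pow_mul, neg_sq, Real.sq_sqrt hy.1]
  ring

end Measure

end

open MeasureTheory PowerSeries

/-- A formal power series `f ∈ ℝ⟦t⟧` is represented by the S-fraction with
coefficients `α`. -/
def IsSFractionOf (α : ℕ → ℝ) (f : PowerSeries ℝ) : Prop :=
  ∃ F : ℕ → PowerSeries ℝ,
    (∀ k, F k * (1 - PowerSeries.C (α (k + 1)) * PowerSeries.X * F (k + 1)) = 1) ∧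
    f = PowerSeries.C (α 0) * F 0

/-- `a` is a Hausdorff moment sequence. -/
def IsHausdorffMomentSeq (a : ℕ → ℝ) : Prop :=
  ∃ μ : Measure ℝ, IsFiniteMeasure μ ∧ μ (Set.Icc (0 : ℝ) 1)ᶜ = 0 ∧
    ∀ n : ℕ, a n = ∫ x : ℝ, x ^ n ∂μ

/-- The Wall coefficients: `α_0 = c`, `α_1 = g_1`, `α_n = (1 - g_{n-1}) g_n` for `n ≥ 2`. -/
def wallAlpha (c : ℝ) (g : ℕ → ℝ) : ℕ → ℝ := fun n =>
  if n = 0 then c else if n = 1 then g 1 else (1 - g (n - 1)) * g n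

lemma wallAlpha_wallParam_succ {L : Polynomial ℝ →ₗ[ℝ] ℝ} (hpos : ∀ p, 0 ≤ L (p * p))
    (hpos' : ∀ p, 0 ≤ L ((1 - Polynomial.X) * p * p))
    (heven : ∀ p, L (p.comp (-Polynomial.X)) = L p) (x : ℝ) (k : ℕ) :
    wallAlpha x (wallParam L) (k + 1) = orthoRecCoeff L (k + 1) := by
  rcases k with _ | k
  · rw [orthoRecCoeff_one heven]; rfl
  · rw [orthoRecCoeff_succ_succ hpos hpos' heven]; rfl

/-- Forward direction of Wall's theorem: a Hausdorff moment sequence with `a_0 = 1`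
has an S-fraction representation with coefficients `α_0 = 1`, `α_1 = g_1`,
`α_n = (1 - g_{n-1}) g_n` where all `g_n ∈ [0,1]`. -/
theorem wall_forward (a : ℕ → ℝ) (ha : IsHausdorffMomentSeq a) (ha0 : a 0 = 1) :
    ∃ g : ℕ → ℝ, (∀ n, 1 ≤ n → g n ∈ Set.Icc (0 : ℝ) 1) ∧
      IsSFractionOf (wallAlpha 1 g) (PowerSeries.mk a) := by
  obtain ⟨μ, hμ, hsupp, hmom⟩ := ha
  have hpos := evenMomentFunctional_mul_self_nonneg μ
  have hpos' := evenMomentFunctional_one_sub_X_mul_self_nonneg μ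
  have heven := evenMomentFunctional_comp_neg_X μ
  have hmoment (n : ℕ) : evenMomentFunctional μ (Polynomial.X ^ (2 * n)) = a n := by
    rw [evenMomentFunctional_X_pow_two_mul, hmom, setIntegral_eq_integral_of_ae_compl_eq_zero]
    filter_upwards [measure_eq_zero_iff_ae_notMem.mp hsupp] with y hy hy'
    exact absurd (Set.mem_compl hy') hy
  have hc := wallAlpha_wallParam_succ hpos hpos' heven 1
  refine ⟨wallParam (evenMomentFunctional μ), fun n hn => ?_, sfracTail (wallAlpha 1 _),
    sfracTail_mul_one_sub _, ?_⟩
  · obtain ⟨k, rfl⟩ := Nat.exists_eq_add_of_le' hn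
    exact wallParam_succ_mem_Icc hpos hpos' heven k
  · ext n
    have h1 : evenMomentFunctional μ 1 = 1 := by simpa [ha0] using hmoment 0
    rw [coeff_mk, ← hmoment, apply_X_pow_two_mul_eq_coeff_sfracTail hpos heven hc, h1, mul_one]
    simp [wallAlpha]
end

section
/- A sequence a : ℕ → ℝ is a Stieltjes moment sequence if and only if the aerated sequence â = (a_0, 0, a_1, 0, a_2, 0, ...) is a Hamburger moment sequence. -/
open MeasureTheory
open scoped ENNReal

/-- `a` is a Hamburger moment sequence. -/
def IsHamburgerMomentSeq (a : ℕ → ℝ) : Prop :=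
  ∃ μ : Measure ℝ, (∀ n : ℕ, Integrable (fun x : ℝ => x ^ n) μ) ∧
    ∀ n : ℕ, a n = ∫ x : ℝ, x ^ n ∂μ

/-- `a` is a Stieltjes moment sequence. -/
def IsStieltjesMomentSeq (a : ℕ → ℝ) : Prop :=
  ∃ μ : Measure ℝ, μ (Set.Iio (0 : ℝ)) = 0 ∧
    (∀ n : ℕ, Integrable (fun x : ℝ => x ^ n) μ) ∧
    ∀ n : ℕ, a n = ∫ x : ℝ, x ^ n ∂μ

/-- The aerated sequence `â = (a_0, 0, a_1, 0, a_2, 0, …)`. -/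
def aerate (a : ℕ → ℝ) : ℕ → ℝ := fun n => if Even n then a (n / 2) else 0


lemma sqrt_pow_le_aux (x : ℝ) (hx : 0 ≤ x) (k : ℕ) :
    Real.sqrt x ^ k ≤ x ^ (k / 2) + x ^ (k / 2 + 1) := by
  have hs : Real.sqrt x ^ 2 = x := Real.sq_sqrt hx
  have hsn := Real.sqrt_nonneg x
  rcases Nat.even_or_odd k with ⟨t, rfl⟩ | ⟨t, rfl⟩
  · have hm : (t + t) / 2 = t := by omega
    rw [hm, ← two_mul, pow_mul, hs]
    exact le_add_of_nonneg_right (pow_nonneg hx _)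
  · have hm : (2 * t + 1) / 2 = t := by omega
    rw [hm, pow_succ, pow_mul, hs]
    rcases le_total x 1 with h1 | h1
    · have hle : Real.sqrt x ≤ 1 := by
        rw [show (1:ℝ) = Real.sqrt 1 by simp]
        exact Real.sqrt_le_sqrt h1
      calc x ^ t * Real.sqrt x ≤ x ^ t * 1 :=
            mul_le_mul_of_nonneg_left hle (pow_nonneg hx t)
        _ = x ^ t := mul_one _
        _ ≤ x ^ t + x ^ (t + 1) := le_add_of_nonneg_right (pow_nonneg hx _)
    · have hsx : Real.sqrt x ≤ x := by
        nlinarith [sq_nonneg (Real.sqrt x - 1)]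
      calc x ^ t * Real.sqrt x ≤ x ^ t * x :=
            mul_le_mul_of_nonneg_left hsx (pow_nonneg hx t)
        _ = x ^ (t + 1) := (pow_succ x t).symm
        _ ≤ x ^ t + x ^ (t + 1) := le_add_of_nonneg_left (pow_nonneg hx _)

/-- `a` is a Stieltjes moment sequence iff the aerated sequence
`â = (a_0, 0, a_1, 0, a_2, 0, …)` is a Hamburger moment sequence. -/
theorem stieltjes_iff_aerated_hamburger (a : ℕ → ℝ) :
    IsStieltjesMomentSeq a ↔ IsHamburgerMomentSeq (aerate a) := by
  constructor
  · rintro ⟨μ, hμ0, hint, hmom⟩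
    -- a.e. nonneg
    have hpos : ∀ᵐ x ∂μ, 0 ≤ x := by
      rw [MeasureTheory.ae_iff]
      convert hμ0 using 2
      ext x
      simp [Set.Iio, not_le]
    have hsqrt : Measurable Real.sqrt := Real.continuous_sqrt.measurable
    have hnsqrt : Measurable (fun x : ℝ => -Real.sqrt x) := hsqrt.neg
    -- integrability of (√x)^k and (-√x)^k wrt μ
    have hintk : ∀ k : ℕ, Integrable (fun x : ℝ => Real.sqrt x ^ k) μ := by
      intro k
      refine Integrable.mono (((hint (k / 2)).abs).add ((hint (k / 2 + 1)).abs))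
        ((Real.continuous_sqrt.pow k)).aestronglyMeasurable ?_
      refine hpos.mono fun x hx => ?_
      simp only [Pi.add_apply, Real.norm_eq_abs]
      rw [abs_of_nonneg (pow_nonneg (Real.sqrt_nonneg x) k)]
      calc Real.sqrt x ^ k ≤ x ^ (k / 2) + x ^ (k / 2 + 1) := sqrt_pow_le_aux x hx k
        _ ≤ |x ^ (k / 2)| + |x ^ (k / 2 + 1)| := add_le_add (le_abs_self _) (le_abs_self _)
        _ ≤ |(|x ^ (k / 2)| + |x ^ (k / 2 + 1)|)| := le_abs_self _
    set ν : Measure ℝ :=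
      ((1:ℝ≥0∞)/2) • (μ.map Real.sqrt + μ.map (fun x : ℝ => -Real.sqrt x)) with hν
    have hint1 : ∀ k : ℕ, Integrable (fun x : ℝ => x ^ k) (μ.map Real.sqrt) := by
      intro k
      rw [integrable_map_measure (continuous_pow k).aestronglyMeasurable
        hsqrt.aemeasurable]
      exact hintk k
    have hint2 : ∀ k : ℕ, Integrable (fun x : ℝ => x ^ k) (μ.map (fun x : ℝ => -Real.sqrt x)) := by
      intro k
      rw [integrable_map_measure (continuous_pow k).aestronglyMeasurable
        hnsqrt.aemeasurable]
      have : ((fun x : ℝ => x ^ k) ∘ fun x : ℝ => -Real.sqrt x)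
          = fun x : ℝ => (-1 : ℝ) ^ k * Real.sqrt x ^ k := by
        ext x; simp only [Function.comp_apply]; rw [neg_pow]
      rw [this]
      exact (hintk k).const_mul _
    have hintν : ∀ k : ℕ, Integrable (fun x : ℝ => x ^ k) ν :=
      fun k => ((hint1 k).add_measure (hint2 k)).smul_measure (by norm_num)
    refine ⟨ν, hintν, fun n => ?_⟩
    have hcalc : ∫ x : ℝ, x ^ n ∂ν
        = (1/2 : ℝ) * ((∫ x : ℝ, Real.sqrt x ^ n ∂μ) + ∫ x : ℝ, (-Real.sqrt x) ^ n ∂μ) := by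
      rw [hν, integral_smul_measure, integral_add_measure (hint1 n) (hint2 n),
        integral_map hsqrt.aemeasurable (continuous_pow n).aestronglyMeasurable,
        integral_map hnsqrt.aemeasurable (continuous_pow n).aestronglyMeasurable]
      norm_num
    rcases Nat.even_or_odd n with he | ho
    · obtain ⟨m, rfl⟩ := he
      have key : ∫ x : ℝ, Real.sqrt x ^ (m + m) ∂μ = ∫ x : ℝ, x ^ m ∂μ := by
        refine integral_congr_ae (hpos.mono fun x hx => ?_)
        show Real.sqrt x ^ (m + m) = x ^ m
        rw [← two_mul, pow_mul, Real.sq_sqrt hx]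
      have key2 : (fun x : ℝ => (-Real.sqrt x) ^ (m + m)) = fun x : ℝ => Real.sqrt x ^ (m + m) := by
        ext x; rw [← two_mul, neg_pow]; norm_num [pow_mul]
      rw [hcalc, key2, key]
      have : aerate a (m + m) = a m := by
        simp [aerate, ← two_mul, Nat.even_iff, Nat.mul_div_cancel_left m (by norm_num : 0 < 2),
          Nat.mul_mod_right]
      rw [this, hmom m]; ring
    · obtain ⟨m, rfl⟩ := ho
      have key2 : (fun x : ℝ => (-Real.sqrt x) ^ (2 * m + 1))
          = fun x : ℝ => -(Real.sqrt x ^ (2 * m + 1)) := by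
        ext x; rw [neg_pow]; norm_num [pow_succ, pow_mul]
      rw [hcalc, key2, integral_neg]
      have : aerate a (2 * m + 1) = 0 := by
        simp [aerate, Nat.even_iff, Nat.add_mul_mod_self_left, Nat.mul_mod_right]
      rw [this]; ring
  · rintro ⟨ν, hint, hmom⟩
    have hsq : Measurable (fun x : ℝ => x ^ 2) := (continuous_pow 2).measurable
    refine ⟨ν.map (fun x : ℝ => x ^ 2), ?_, ?_, ?_⟩
    · rw [Measure.map_apply hsq measurableSet_Iio]
      have h0 : (fun x : ℝ => x ^ 2) ⁻¹' Set.Iio 0 = ∅ := by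
        ext x
        simp only [Set.mem_preimage, Set.mem_Iio, Set.mem_empty_iff_false, iff_false, not_lt]
        positivity
      rw [h0]
      exact measure_empty
    · intro n
      rw [integrable_map_measure (continuous_pow n).aestronglyMeasurable hsq.aemeasurable]
      have : ((fun x : ℝ => x ^ n) ∘ fun x : ℝ => x ^ 2) = fun x : ℝ => x ^ (2 * n) := by
        ext x; simp [← pow_mul, mul_comm]
      rw [this]; exact hint (2 * n)
    · intro n
      rw [integral_map hsq.aemeasurable (continuous_pow n).aestronglyMeasurable]
      have h1 : a n = aerate a (2 * n) := by
        simp [aerate, Nat.mul_div_cancel_left n (by norm_num : 0 < 2)]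
      have h2 : (fun x : ℝ => (x ^ 2) ^ n) = fun x : ℝ => x ^ (2 * n) := by
        ext x; rw [← pow_mul, mul_comm]
      calc a n = aerate a (2 * n) := h1
        _ = ∫ x : ℝ, x ^ (2 * n) ∂ν := hmom (2 * n)
        _ = ∫ x : ℝ, (x ^ 2) ^ n ∂ν := by rw [h2]
end

section
/- If a : ℕ → ℝ is a Hamburger moment sequence satisfying |a_n| ≤ A·B^n for all n ≥ 0, for some constants A, B < ∞, then the representing measure μ is unique and is supported on [−B, B]; that is, any positive Borel measure μ on ℝ with ∫ x^n dμ(x) = a_n for all n is supported on [−B,B], and any two such measures are equal. -/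
/-!
Markov's inequality for the even moments gives `μ {x | c ≤ |x|} ≤ A (B / c) ^ (2k) → 0` for every
`c > B`, so every representing measure lives on `[-B, B]`. Two finite measures on a compact interval
with the same moments integrate every polynomial alike, hence, by Weierstrass approximation, every
bounded continuous function alike, and so they are equal.
-/

open MeasureTheory Set Filter Topology Polynomial BoundedContinuousFunction

variable {μ ν : Measure ℝ}

theorem pow_mul_measureReal_abs_ge_le_integral_pow [IsFiniteMeasure μ] {c : ℝ} {k : ℕ}
    (hc : 0 ≤ c) (hint : Integrable (fun x : ℝ => x ^ (2 * k)) μ) :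
    c ^ (2 * k) * μ.real {x | c ≤ |x|} ≤ ∫ x, x ^ (2 * k) ∂μ := by
  have hsub : {x : ℝ | c ≤ |x|} ⊆ {x | c ^ (2 * k) ≤ x ^ (2 * k)} := fun x hx => by
    simpa only [mem_ofPred_eq, pow_mul, sq_abs] using pow_le_pow_left₀ hc hx (2 * k)
  calc c ^ (2 * k) * μ.real {x | c ≤ |x|}
      ≤ c ^ (2 * k) * μ.real {x | c ^ (2 * k) ≤ x ^ (2 * k)} :=
        mul_le_mul_of_nonneg_left (measureReal_mono hsub) (by positivity)
    _ ≤ ∫ x, x ^ (2 * k) ∂μ :=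
      mul_meas_ge_le_integral_of_nonneg (ae_of_all _ fun x => (even_two_mul k).pow_nonneg x) hint _

theorem measure_abs_ge_eq_zero_of_integral_pow_le [IsFiniteMeasure μ] {A B c : ℝ} (hB : 0 ≤ B)
    (hBc : B < c) (hint : ∀ k, Integrable (fun x : ℝ => x ^ (2 * k)) μ)
    (hbound : ∀ k, ∫ x, x ^ (2 * k) ∂μ ≤ A * B ^ (2 * k)) : μ {x | c ≤ |x|} = 0 := by
  have hc : 0 < c := hB.trans_lt hBc
  have hle : ∀ k : ℕ, μ.real {x | c ≤ |x|} ≤ A * ((B / c) ^ 2) ^ k := fun k => by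
    rw [← pow_mul, div_pow, ← mul_div_assoc, le_div_iff₀ (by positivity), mul_comm]
    exact (pow_mul_measureReal_abs_ge_le_integral_pow hc.le (hint k)).trans (hbound k)
  have hlim : Tendsto (fun k : ℕ => A * ((B / c) ^ 2) ^ k) atTop (𝓝 0) := by
    simpa using (tendsto_pow_atTop_nhds_zero_of_lt_one (by positivity) <|
      pow_lt_one₀ (by positivity) ((div_lt_one hc).2 hBc) two_ne_zero).const_mul A
  exact (measureReal_eq_zero_iff).1 <| le_antisymm (ge_of_tendsto' hlim hle) measureReal_nonneg

theorem ae_mem_Icc_of_abs_integral_pow_le [IsFiniteMeasure μ] {A B : ℝ}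
    (hint : ∀ n, Integrable (fun x : ℝ => x ^ n) μ)
    (hbound : ∀ n, |∫ x, x ^ n ∂μ| ≤ A * B ^ n) : ∀ᵐ x ∂μ, x ∈ Icc (-B) B := by
  rcases lt_or_ge B 0 with hB | hB
  · -- the zeroth and first moments force `A = 0`, hence `μ = 0`
    have h0 := hbound 0
    have h1 := hbound 1
    simp only [pow_zero, integral_const, smul_eq_mul, mul_one, pow_one] at h0 h1
    have hA : A = 0 := by nlinarith [abs_nonneg (μ.real univ), abs_nonneg (∫ x, x ∂μ)]
    have hμ : μ = 0 := by
      rw [← Measure.measure_univ_eq_zero, ← measureReal_eq_zero_iff]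
      exact abs_nonpos_iff.1 (by simpa [hA] using h0)
    simp [hμ]
  · have hlt : ∀ n : ℕ, ∀ᵐ x ∂μ, |x| < B + 1 / (n + 1) := fun n => by
      simp only [ae_iff, not_lt]
      exact measure_abs_ge_eq_zero_of_integral_pow_le hB
        (lt_add_of_pos_right B Nat.one_div_pos_of_nat) (fun _ => hint _)
        (fun _ => (le_abs_self _).trans (hbound _))
    filter_upwards [ae_all_iff.2 hlt] with x hx
    refine abs_le.1 (ge_of_tendsto' (x := atTop) ?_ fun n => (hx n).le)
    simpa using tendsto_one_div_add_atTop_nhds_zero_nat.const_add B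

theorem integral_eval_eq_sum (hint : ∀ n, Integrable (fun x : ℝ => x ^ n) μ) (p : ℝ[X]) :
    ∫ x, p.eval x ∂μ = ∑ i ∈ Finset.range (p.natDegree + 1), p.coeff i * ∫ x, x ^ i ∂μ := by
  simp_rw [eval_eq_sum_range]
  rw [integral_finsetSum _ fun i _ => (hint i).const_mul _]
  simp_rw [integral_const_mul]

theorem integrable_eval (hint : ∀ n, Integrable (fun x : ℝ => x ^ n) μ) (p : ℝ[X]) :
    Integrable (fun x => p.eval x) μ := by
  simp_rw [eval_eq_sum_range]
  exact integrable_finsetSum _ fun i _ => (hint i).const_mul _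

theorem integral_eq_of_forall_integral_eval_eq [IsFiniteMeasure μ] [IsFiniteMeasure ν] {a b : ℝ}
    (hμ : ∀ᵐ x ∂μ, x ∈ Icc a b) (hν : ∀ᵐ x ∂ν, x ∈ Icc a b)
    (hμp : ∀ p : ℝ[X], Integrable (fun x => p.eval x) μ)
    (hνp : ∀ p : ℝ[X], Integrable (fun x => p.eval x) ν)
    (heq : ∀ p : ℝ[X], ∫ x, p.eval x ∂μ = ∫ x, p.eval x ∂ν) (g : ℝ →ᵇ ℝ) :
    ∫ x, g x ∂μ = ∫ x, g x ∂ν := by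
  set C := μ.real univ + ν.real univ
  have happrox : ∀ ε > 0, dist (∫ x, g x ∂μ) (∫ x, g x ∂ν) ≤ ε * C := fun ε hε => by
    obtain ⟨p, hp⟩ := exists_polynomial_near_of_continuousOn a b g g.continuous.continuousOn ε hε
    have hclose : ∀ ρ : Measure ℝ, [IsFiniteMeasure ρ] → (∀ᵐ x ∂ρ, x ∈ Icc a b) →
        Integrable (fun x => p.eval x) ρ →
        dist (∫ x, g x ∂ρ) (∫ x, p.eval x ∂ρ) ≤ ε * ρ.real univ :=
      fun ρ _ hρ hρp => by
        rw [dist_eq_norm, ← integral_sub (g.integrable ρ) hρp]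
        refine norm_integral_le_of_norm_le_const ?_
        filter_upwards [hρ] with x hx
        rw [Real.norm_eq_abs, abs_sub_comm]
        exact (hp x hx).le
    calc dist (∫ x, g x ∂μ) (∫ x, g x ∂ν)
        ≤ dist (∫ x, g x ∂μ) (∫ x, p.eval x ∂μ) + dist (∫ x, g x ∂ν) (∫ x, p.eval x ∂ν) := by
          rw [heq p]; exact dist_triangle_right _ _ _
      _ ≤ ε * C := by
          rw [mul_add]; exact add_le_add (hclose μ hμ (hμp p)) (hclose ν hν (hνp p))
  refine eq_of_forall_dist_le fun ε hε => (happrox (ε / (C + 1)) (by positivity)).trans ?_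
  rw [div_mul_eq_mul_div, div_le_iff₀ (by positivity)]
  nlinarith

theorem Measure.ext_of_integral_pow_eq [IsFiniteMeasure μ] [IsFiniteMeasure ν] {a b : ℝ}
    (hμ : ∀ᵐ x ∂μ, x ∈ Icc a b) (hν : ∀ᵐ x ∂ν, x ∈ Icc a b)
    (hμint : ∀ n, Integrable (fun x : ℝ => x ^ n) μ)
    (hνint : ∀ n, Integrable (fun x : ℝ => x ^ n) ν)
    (heq : ∀ n, ∫ x, x ^ n ∂μ = ∫ x, x ^ n ∂ν) : μ = ν :=
  ext_of_forall_integral_eq_of_IsFiniteMeasure <|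
    integral_eq_of_forall_integral_eval_eq hμ hν (integrable_eval hμint) (integrable_eval hνint)
      (fun p => by simp only [integral_eval_eq_sum hμint, integral_eval_eq_sum hνint, heq])

theorem hamburger_bounded_unique_support_general (a : ℕ → ℝ) (A B : ℝ)
    (hbound : ∀ n : ℕ, |a n| ≤ A * B ^ n) :
    (∀ μ : Measure ℝ, (∀ n : ℕ, Integrable (fun x : ℝ => x ^ n) μ) →
      (∀ n : ℕ, a n = ∫ x : ℝ, x ^ n ∂μ) → μ (Set.Icc (-B) B)ᶜ = 0) ∧
    (∀ μ ν : Measure ℝ,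
      (∀ n : ℕ, Integrable (fun x : ℝ => x ^ n) μ) →
      (∀ n : ℕ, a n = ∫ x : ℝ, x ^ n ∂μ) →
      (∀ n : ℕ, Integrable (fun x : ℝ => x ^ n) ν) →
      (∀ n : ℕ, a n = ∫ x : ℝ, x ^ n ∂ν) → μ = ν) := by
  have hfinite : ∀ μ : Measure ℝ, (∀ n : ℕ, Integrable (fun x : ℝ => x ^ n) μ) →
      IsFiniteMeasure μ := fun μ hint =>
    (integrable_const_iff_isFiniteMeasure one_ne_zero).1 (by simpa using hint 0)
  have hsupport : ∀ μ : Measure ℝ, (∀ n : ℕ, Integrable (fun x : ℝ => x ^ n) μ) →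
      (∀ n : ℕ, a n = ∫ x : ℝ, x ^ n ∂μ) → ∀ᵐ x ∂μ, x ∈ Icc (-B) B := fun μ hint hmom =>
    have := hfinite μ hint
    ae_mem_Icc_of_abs_integral_pow_le hint fun n => hmom n ▸ hbound n
  refine ⟨fun μ hint hmom => mem_ae_iff.1 (hsupport μ hint hmom), ?_⟩
  intro μ ν hμint hμmom hνint hνmom
  have := hfinite μ hμint
  have := hfinite ν hνint
  exact Measure.ext_of_integral_pow_eq (hsupport μ hμint hμmom) (hsupport ν hνint hνmom)
    hμint hνint fun n => (hμmom n).symm.trans (hνmom n)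

/-- If `a` is a Hamburger moment sequence with `|a_n| ≤ A·B^n`, then every
representing measure is supported on `[-B, B]`, and any two representing
measures are equal. -/
theorem hamburger_bounded_unique_support (a : ℕ → ℝ) (A B : ℝ)
    (hbound : ∀ n : ℕ, |a n| ≤ A * B ^ n)
    (hham : ∃ μ : Measure ℝ, (∀ n : ℕ, Integrable (fun x : ℝ => x ^ n) μ) ∧
      ∀ n : ℕ, a n = ∫ x : ℝ, x ^ n ∂μ) :
    (∀ μ : Measure ℝ, (∀ n : ℕ, Integrable (fun x : ℝ => x ^ n) μ) →
      (∀ n : ℕ, a n = ∫ x : ℝ, x ^ n ∂μ) → μ (Set.Icc (-B) B)ᶜ = 0) ∧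
    (∀ μ ν : Measure ℝ,
      (∀ n : ℕ, Integrable (fun x : ℝ => x ^ n) μ) →
      (∀ n : ℕ, a n = ∫ x : ℝ, x ^ n ∂μ) →
      (∀ n : ℕ, Integrable (fun x : ℝ => x ^ n) ν) →
      (∀ n : ℕ, a n = ∫ x : ℝ, x ^ n ∂ν) → μ = ν) :=
  hamburger_bounded_unique_support_general a A B hbound
end

section
/- Binomial transform of a J-fraction: Let ξ ∈ ℝ, let γ_0, γ_1, ... and β_1, β_2, ... be real numbers, and suppose Σ_{n≥0} a_n t^n is represented by the J-fraction with coefficients (γ, β). Then the ξ-binomial transform b, defined by b_n = Σ_{k=0}^n C(n,k) a_k ξ^{n−k}, satisfies that Σ_{n≥0} b_n t^n is represented by the J-fraction with coefficients (γ + ξ, β), i.e., with γ_n replaced by γ_n + ξ for every n and the same β. -/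
/-!
Write `U = 1/(1 - ξt)`. The `ξ`-binomial transform of `f` is `U · f(tU)`, i.e. `f` composed with
`t ↦ t/(1 - ξt)` and multiplied by `U`. Substituting `t/(1 - ξt)` into
`h_k (1 - γ_k t - β_{k+1} t² h_{k+1}) = 1` and multiplying by `(1 - ξt) U = 1` gives the same
relation for the transformed series, with `γ_k` replaced by `γ_k + ξ`.
-/

open PowerSeries

/-- A formal power series `h ∈ ℝ⟦t⟧` is represented by the J-fraction with
coefficients `(γ, β)` (here `β 0` is unused). -/
def IsJFractionOf (γ β : ℕ → ℝ) (h : PowerSeries ℝ) : Prop :=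
  ∃ H : ℕ → PowerSeries ℝ,
    (∀ k, H k * (1 - PowerSeries.C (γ k) * PowerSeries.X
        - PowerSeries.C (β (k + 1)) * PowerSeries.X ^ 2 * H (k + 1)) = 1) ∧
    h = H 0

namespace PowerSeries

open Finset

variable {R : Type*} [CommRing R]

theorem coeff_X_mul_pow_of_lt (g : R⟦X⟧) {n d : ℕ} (h : n < d) :
    coeff n ((X * g) ^ d) = 0 := by
  rw [mul_pow, coeff_X_pow_mul', if_neg (not_le.mpr h)]

theorem coeff_mul_subst_X_mul (f g V : R⟦X⟧) (n : ℕ) :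
    coeff n (V * f.subst (X * g)) =
      ∑ d ∈ range (n + 1), coeff d f * coeff n (V * (X * g) ^ d) := by
  have hs : HasSubst (X * g) := HasSubst.of_constantCoeff_zero' (by simp)
  have coeff_subst_le : ∀ j ≤ n, coeff j (f.subst (X * g)) =
      ∑ d ∈ range (n + 1), coeff d f * coeff j ((X * g) ^ d) := by
    intro j hj
    rw [coeff_subst' hs, finsum_eq_sum_of_support_subset _ fun d hd => ?_]
    · rfl
    · by_contra hdn
      rw [mem_coe, mem_range, not_lt] at hdn
      exact hd (by simp only [coeff_X_mul_pow_of_lt g (show j < d by omega), smul_zero])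
  calc coeff n (V * f.subst (X * g))
      = ∑ p ∈ antidiagonal n, ∑ d ∈ range (n + 1),
          coeff d f * (coeff p.1 V * coeff p.2 ((X * g) ^ d)) := by
        rw [coeff_mul]
        refine sum_congr rfl fun p hp => ?_
        rw [coeff_subst_le p.2 (HasAntidiagonal.antidiagonal.snd_le hp), mul_sum]
        exact sum_congr rfl fun d _ => by ring
    _ = ∑ d ∈ range (n + 1), coeff d f * coeff n (V * (X * g) ^ d) := by
        rw [sum_comm]
        simp_rw [coeff_mul, mul_sum]

theorem one_sub_C_mul_X_mul_rescale_mk_one (ξ : R) : (1 - C ξ * X) * rescale ξ (mk 1) = 1 := by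
  rw [← rescale_X, ← map_one (rescale ξ), ← map_sub, ← map_mul, mul_comm,
    mk_one_mul_one_sub_eq_one, map_one]

theorem coeff_X_pow_mul_rescale_mk_one_pow (ξ : R) (n d : ℕ) :
    coeff n (X ^ d * rescale ξ (mk 1) ^ (d + 1)) =
      if d ≤ n then n.choose d * ξ ^ (n - d) else 0 := by
  rw [← map_pow, mk_one_pow_eq_mk_choose_add, coeff_X_pow_mul', coeff_rescale, coeff_mk]
  split_ifs with h
  · rw [Nat.add_sub_cancel' h, mul_comm]
  · rfl

noncomputable def binomialTransform (ξ : R) (f : R⟦X⟧) : R⟦X⟧ :=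
  mk fun n => ∑ k ∈ range (n + 1), (n.choose k : R) * coeff k f * ξ ^ (n - k)

theorem binomialTransform_eq_mul_subst (ξ : R) (f : R⟦X⟧) :
    binomialTransform ξ f = rescale ξ (mk 1) * f.subst (X * rescale ξ (mk 1)) := by
  ext n
  rw [binomialTransform, coeff_mk, coeff_mul_subst_X_mul]
  refine sum_congr rfl fun d hd => ?_
  rw [show rescale ξ (mk 1) * (X * rescale ξ (mk 1)) ^ d = X ^ d * rescale ξ (mk 1) ^ (d + 1) by
    ring, coeff_X_pow_mul_rescale_mk_one_pow, if_pos (Nat.le_of_lt_succ (mem_range.mp hd))]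
  ring

theorem binomialTransform_mul_one_sub_eq_one {ξ c b : R} {h h' : R⟦X⟧}
    (hh : h * (1 - C c * X - C b * X ^ 2 * h') = 1) :
    binomialTransform ξ h * (1 - C (c + ξ) * X - C b * X ^ 2 * binomialTransform ξ h') = 1 := by
  set U := rescale ξ (mk 1)
  have hs : HasSubst (X * U) := HasSubst.of_constantCoeff_zero' (by simp)
  have hσ : h.subst (X * U) * (1 - C c * (X * U) - C b * (X * U) ^ 2 * h'.subst (X * U)) = 1 := by
    simpa only [map_mul, map_sub, map_one, map_pow, ← algebraMap_eq, AlgHom.commutes,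
      substAlgHom_X, coe_substAlgHom] using congrArg (substAlgHom hs) hh
  have hU : (1 - C ξ * X) * U = 1 := one_sub_C_mul_X_mul_rescale_mk_one ξ
  rw [binomialTransform_eq_mul_subst, binomialTransform_eq_mul_subst, map_add]
  linear_combination (1 - C ξ * X) * U * hσ + (h.subst (X * U) * C c * X * U +
    h.subst (X * U) * C b * X ^ 2 * U ^ 2 * h'.subst (X * U) + 1) * hU

end PowerSeries

/-- Binomial transform of a J-fraction: if `∑ a_n t^n` is represented by the
J-fraction with coefficients `(γ, β)`, then the `ξ`-binomial transform
`b_n = ∑_{k=0}^n C(n,k) a_k ξ^{n-k}` has generating function represented by the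
J-fraction with coefficients `(γ + ξ, β)`. -/
theorem binomial_transform_jfraction (ξ : ℝ) (γ β : ℕ → ℝ) (a : ℕ → ℝ)
    (ha : IsJFractionOf γ β (PowerSeries.mk a)) :
    IsJFractionOf (fun n => γ n + ξ) β
      (PowerSeries.mk fun n =>
        ∑ k ∈ Finset.range (n + 1), (n.choose k : ℝ) * a k * ξ ^ (n - k)) := by
  obtain ⟨H, hH, h0⟩ := ha
  refine ⟨fun k => binomialTransform ξ (H k), fun k => ?_, ?_⟩
  · exact binomialTransform_mul_one_sub_eq_one (hH k)
  · simp only [← h0, binomialTransform, coeff_mk]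
end

section
/- Monotonicity of S-fraction coefficients: Let α and α' be sequences of real numbers with 0 ≤ α_i ≤ α'_i for all i ≥ 0, and let f = Σ a_n t^n and f' = Σ a'_n t^n be the formal power series represented by the S-fractions with coefficients α and α' respectively. Then 0 ≤ a_n ≤ a'_n for all n ≥ 0. -/
open PowerSeries

/-! Since `F k = 1 + α (k+1) t F (k+1) F k`, the coefficient of `t^(n+1)` in `F k` is `α (k+1)`
times a sum of products of coefficients of degree at most `n` of `F (k+1)` and `F k`. Strong
induction on the degree, uniformly in `k`, therefore shows that every coefficient of every `F k`
is nonnegative and monotone in `α`, and so is every coefficient of `f = α 0 F 0`. -/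

lemma nonneg_and_mul_le_mul {R : Type*} [Semiring R] [PartialOrder R] [IsOrderedRing R]
    {a a' b b' : R} (ha : 0 ≤ a ∧ a ≤ a') (hb : 0 ≤ b ∧ b ≤ b') :
    0 ≤ a * b ∧ a * b ≤ a' * b' :=
  ⟨mul_nonneg ha.1 hb.1, mul_le_mul ha.2 hb.2 hb.1 (ha.1.trans ha.2)⟩

namespace PowerSeries

theorem coeff_mul_nonneg_and_le {R : Type*} [Semiring R] [PartialOrder R] [IsOrderedRing R]
    {f f' g g' : R⟦X⟧} {n : ℕ}
    (hf : ∀ i ≤ n, 0 ≤ coeff i f ∧ coeff i f ≤ coeff i f')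
    (hg : ∀ i ≤ n, 0 ≤ coeff i g ∧ coeff i g ≤ coeff i g') :
    0 ≤ coeff n (f * g) ∧ coeff n (f * g) ≤ coeff n (f' * g') := by
  have hterm : ∀ p ∈ Finset.HasAntidiagonal.antidiagonal n,
      0 ≤ coeff p.1 f * coeff p.2 g ∧
        coeff p.1 f * coeff p.2 g ≤ coeff p.1 f' * coeff p.2 g' := by
    intro p hp
    rw [Finset.HasAntidiagonal.mem_antidiagonal] at hp
    exact nonneg_and_mul_le_mul (hf p.1 (by omega)) (hg p.2 (by omega))
  rw [coeff_mul, coeff_mul]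
  exact ⟨Finset.sum_nonneg fun p hp => (hterm p hp).1,
    Finset.sum_le_sum fun p hp => (hterm p hp).2⟩

section SFractionStep

variable {R : Type*} [CommRing R] {a : R} {F G : R⟦X⟧}

theorem coeff_zero_eq_one_of_mul_one_sub_eq_one (h : F * (1 - C a * X * G) = 1) :
    coeff 0 F = 1 := by
  simpa using congrArg constantCoeff h

theorem coeff_succ_eq_of_mul_one_sub_eq_one (h : F * (1 - C a * X * G) = 1) (n : ℕ) :
    coeff (n + 1) F = a * coeff n (G * F) := by
  have hF : F = 1 + C a * (X * (G * F)) := by linear_combination h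
  conv_lhs => rw [hF]
  simp [coeff_succ_X_mul]

end SFractionStep

end PowerSeries

theorem sfraction_tails_coeff_nonneg_and_le {α α' : ℕ → ℝ}
    (hα : ∀ i, 0 ≤ α i) (hαα' : ∀ i, α i ≤ α' i) {F F' : ℕ → PowerSeries ℝ}
    (hF : ∀ k, F k * (1 - C (α (k + 1)) * X * F (k + 1)) = 1)
    (hF' : ∀ k, F' k * (1 - C (α' (k + 1)) * X * F' (k + 1)) = 1) (n k : ℕ) :
    0 ≤ coeff n (F k) ∧ coeff n (F k) ≤ coeff n (F' k) := by
  induction n using Nat.strong_induction_on generalizing k with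
  | _ n ih =>
    cases n with
    | zero =>
      rw [coeff_zero_eq_one_of_mul_one_sub_eq_one (hF k),
        coeff_zero_eq_one_of_mul_one_sub_eq_one (hF' k)]
      exact ⟨zero_le_one, le_rfl⟩
    | succ m =>
      rw [coeff_succ_eq_of_mul_one_sub_eq_one (hF k), coeff_succ_eq_of_mul_one_sub_eq_one (hF' k)]
      exact nonneg_and_mul_le_mul ⟨hα _, hαα' _⟩ <| coeff_mul_nonneg_and_le
        (fun i hi => ih i (by omega) _) (fun i hi => ih i (by omega) _)

/-- Monotonicity of S-fraction coefficients: if `0 ≤ α_i ≤ α'_i` for all `i`, and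
`f`, `f'` are represented by the S-fractions with coefficients `α`, `α'`
respectively, then `0 ≤ a_n ≤ a'_n` for all `n`. -/
theorem sfraction_coeff_monotone (α α' : ℕ → ℝ)
    (hα : ∀ i, 0 ≤ α i) (hαα' : ∀ i, α i ≤ α' i)
    (f f' : PowerSeries ℝ)
    (hf : IsSFractionOf α f) (hf' : IsSFractionOf α' f') :
    ∀ n : ℕ, 0 ≤ PowerSeries.coeff n f ∧
      PowerSeries.coeff n f ≤ PowerSeries.coeff n f' := by
  obtain ⟨F, hF, rfl⟩ := hf
  obtain ⟨F', hF', rfl⟩ := hf'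
  intro n
  rw [coeff_C_mul, coeff_C_mul]
  exact nonneg_and_mul_le_mul ⟨hα 0, hαα' 0⟩
    (sfraction_tails_coeff_nonneg_and_le hα hαα' hF hF' n 0)
end

section
/- Catalan upper bound for S-fractions: If Σ_{n≥0} a_n t^n is represented by the S-fraction with coefficients α_0 = 1 and 0 ≤ α_i ≤ 1 for all i ≥ 1, then 0 ≤ a_n ≤ C_n ≤ 4^n for all n ≥ 0, where C_n = (1/(n+1))·C(2n,n) is the n-th Catalan number. -/
open PowerSeries Finset

/-!
Unfolding `F k = 1 + α (k + 1) t F (k + 1) F k` gives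
`[t^(m+1)] F k = α (k + 1) ∑_{i + j = m} [t^i] F (k + 1) · [t^j] F k`, a Catalan-type convolution.
By strong induction on `n`, simultaneously for all `k`, every `[t^n] F k` lies in `[0, C_n]`:
the factor `α (k + 1) ∈ [0, 1]` can only shrink the convolution, which for the bounds `C_i C_j`
is exactly Segner's recurrence for `C_{m+1}`.
-/

section Recurrence

variable {R : Type*} [CommRing R] {f g : R⟦X⟧} {c : R}

lemma eq_one_add_C_mul_X_mul_of_mul_one_sub_eq_one (h : f * (1 - C c * X * g) = 1) :
    f = 1 + C c * X * (g * f) := by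
  linear_combination h

lemma coeff_zero_of_mul_one_sub_eq_one (h : f * (1 - C c * X * g) = 1) : coeff 0 f = 1 := by
  rw [eq_one_add_C_mul_X_mul_of_mul_one_sub_eq_one h]
  simp [mul_assoc, coeff_zero_eq_constantCoeff]

lemma coeff_succ_of_mul_one_sub_eq_one (h : f * (1 - C c * X * g) = 1) (m : ℕ) :
    coeff (m + 1) f = c * ∑ p ∈ antidiagonal m, coeff p.1 g * coeff p.2 f := by
  conv_lhs => rw [eq_one_add_C_mul_X_mul_of_mul_one_sub_eq_one h]
  rw [map_add, mul_assoc, coeff_C_mul, coeff_succ_X_mul, coeff_mul]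
  simp

end Recurrence

theorem coeff_nonneg_and_le_catalan_of_mul_one_sub_eq_one {R : Type*} [CommRing R] [PartialOrder R]
    [IsOrderedRing R] {α : ℕ → R} (hα : ∀ k, 0 ≤ α (k + 1) ∧ α (k + 1) ≤ 1)
    {F : ℕ → R⟦X⟧} (hF : ∀ k, F k * (1 - C (α (k + 1)) * X * F (k + 1)) = 1) (n k : ℕ) :
    0 ≤ coeff n (F k) ∧ coeff n (F k) ≤ catalan n := by
  induction n using Nat.strong_induction_on generalizing k with
  | _ n ih =>
  cases n with
  | zero => simp [coeff_zero_of_mul_one_sub_eq_one (hF k)]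
  | succ m =>
    have hconv_nonneg : 0 ≤ ∑ p ∈ antidiagonal m, coeff p.1 (F (k + 1)) * coeff p.2 (F k) :=
      Finset.sum_nonneg fun p hp ↦ by
        rw [HasAntidiagonal.mem_antidiagonal] at hp
        exact mul_nonneg (ih p.1 (by omega) (k + 1)).1 (ih p.2 (by omega) k).1
    have hconv_le : ∑ p ∈ antidiagonal m, coeff p.1 (F (k + 1)) * coeff p.2 (F k)
        ≤ catalan (m + 1) := by
      rw [catalan_succ', Nat.cast_sum]
      refine Finset.sum_le_sum fun p hp ↦ ?_
      rw [HasAntidiagonal.mem_antidiagonal] at hp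
      have h₁ := ih p.1 (by omega) (k + 1)
      have h₂ := ih p.2 (by omega) k
      rw [Nat.cast_mul]
      exact mul_le_mul h₁.2 h₂.2 h₂.1 (Nat.cast_nonneg _)
    rw [coeff_succ_of_mul_one_sub_eq_one (hF k)]
    exact ⟨mul_nonneg (hα k).1 hconv_nonneg,
      (mul_le_of_le_one_left hconv_nonneg (hα k).2).trans hconv_le⟩

lemma catalan_cast_eq_div_mul_choose (n : ℕ) :
    (catalan n : ℝ) = 1 / (n + 1 : ℝ) * ((2 * n).choose n : ℝ) := by
  have h : ((n + 1 : ℕ) : ℝ) * catalan n = (2 * n).choose n := by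
    exact_mod_cast succ_mul_catalan_eq_centralBinom n
  push_cast at h
  field_simp
  linarith

lemma catalan_le_four_pow (n : ℕ) : catalan n ≤ 4 ^ n :=
  calc catalan n ≤ n.centralBinom := by
        rw [catalan_eq_centralBinom_div]; exact Nat.div_le_self _ _
    _ ≤ 4 ^ n := Nat.centralBinom_le_four_pow n

/-- Catalan upper bound for S-fractions: if `∑ a_n t^n` is represented by an
S-fraction with `α_0 = 1` and `0 ≤ α_i ≤ 1` for `i ≥ 1`, then
`0 ≤ a_n ≤ C_n ≤ 4^n`, where `C_n = (1/(n+1))·C(2n,n)` is the Catalan number. -/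
theorem sfraction_catalan_bound (α : ℕ → ℝ) (a : ℕ → ℝ)
    (hα0 : α 0 = 1) (hα : ∀ i, 1 ≤ i → 0 ≤ α i ∧ α i ≤ 1)
    (hf : IsSFractionOf α (PowerSeries.mk a)) :
    ∀ n : ℕ, 0 ≤ a n ∧
      a n ≤ (1 / (n + 1 : ℝ)) * ((2 * n).choose n : ℝ) ∧
      (1 / (n + 1 : ℝ)) * ((2 * n).choose n : ℝ) ≤ 4 ^ n := by
  intro n
  obtain ⟨F, hF, hfF⟩ := hf
  have ha : a n = coeff n (F 0) := by
    simpa [hα0] using congrArg (coeff n) hfF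
  obtain ⟨hnonneg, hle⟩ :=
    coeff_nonneg_and_le_catalan_of_mul_one_sub_eq_one (fun k ↦ hα (k + 1) k.succ_pos) hF n 0
  rw [ha, ← catalan_cast_eq_div_mul_choose]
  exact ⟨hnonneg, hle, by exact_mod_cast catalan_le_four_pow n⟩
end

section
/- Intermediate step in the proof of Wall's theorem: Let a : ℕ → ℝ be a Hausdorff moment sequence with a_0 = 1, and define b_n = Σ_{k : 2k ≤ n} C(n, 2k) a_k (the 1-binomial transform of the aerated sequence of a). Then b is a Stieltjes moment sequence whose representing measure is supported on [0,2]. -/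
open MeasureTheory Finset
open scoped ENNReal

theorem two_mul_sum_range_choose_two_mul_mul_pow {R : Type*} [CommRing R] (n : ℕ) (t : R) :
    2 * ∑ k ∈ range (n / 2 + 1), (n.choose (2 * k) : R) * t ^ (2 * k)
      = (1 + t) ^ n + (1 - t) ^ n := by
  have h_odd_cancel : (1 + t) ^ n + (1 - t) ^ n
      = ∑ j ∈ range (n + 1) with Even j, 2 * ((n.choose j : R) * t ^ j) := by
    rw [sum_filter, add_comm 1 t, add_pow, sub_eq_add_neg, add_comm 1 (-t), add_pow,
      ← sum_add_distrib]
    refine sum_congr rfl fun j _ => ?_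
    rcases Nat.even_or_odd j with hj | hj
    · simp only [hj, hj.neg_pow, if_true, one_pow, mul_one]; ring
    · simp only [Nat.not_even_iff_odd.2 hj, hj.neg_pow, if_false, one_pow, mul_one]; ring
  rw [h_odd_cancel, mul_sum]
  refine sum_nbij' (2 * ·) (· / 2) ?_ ?_ ?_ ?_ fun k _ => rfl
  · intro k hk
    simp only [mem_filter, mem_range] at *
    exact ⟨by omega, even_two_mul k⟩
  · intro j hj
    simp only [mem_filter, mem_range] at *
    omega
  · intro k _
    simp
  · intro j hj
    obtain ⟨-, m, rfl⟩ := mem_filter.1 hj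
    omega

theorem ContinuousOn.integrable_of_ae_mem_isCompact {X E : Type*} [TopologicalSpace X]
    [MeasurableSpace X] [OpensMeasurableSpace X] [NormedAddCommGroup E] {μ : Measure X}
    [IsFiniteMeasure μ] {f : X → E} {K : Set X} (hK : IsCompact K) (hKm : MeasurableSet K)
    (hf : ContinuousOn f K) (h : ∀ᵐ x ∂μ, x ∈ K) : Integrable f μ := by
  rw [← Measure.restrict_eq_self_of_ae_mem h]
  exact hf.integrableOn_of_subset_isCompact hK hKm subset_rfl (measure_ne_top _ _)

/-- The law of `1 + ε √X`, where `X ∼ μ` and `ε = ±1` is an independent fair sign: the moments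
of `ε √X` are the aerated moments of `μ`, and adding `1` takes their binomial transform. -/
noncomputable def aeratedBinomialMeasure (μ : Measure ℝ) : Measure ℝ :=
  (2 : ℝ≥0∞)⁻¹ • (μ.map (fun x => 1 + √x) + μ.map (fun x => 1 - √x))

instance {μ : Measure ℝ} [IsFiniteMeasure μ] : IsFiniteMeasure (aeratedBinomialMeasure μ) :=
  Measure.smul_finite _ (by simp)

theorem ae_mem_Icc_aeratedBinomialMeasure {μ : Measure ℝ} (h : ∀ᵐ x ∂μ, x ∈ Set.Icc 0 1) :
    ∀ᵐ y ∂aeratedBinomialMeasure μ, y ∈ Set.Icc 0 2 := by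
  have hsqrt : ∀ᵐ x ∂μ, √x ∈ Set.Icc 0 1 :=
    h.mono fun x hx => ⟨Real.sqrt_nonneg x, Real.sqrt_le_one.2 hx.2⟩
  refine Measure.ae_smul_measure (ae_add_measure_iff.2 ⟨?_, ?_⟩) _ <;>
    refine (ae_map_iff (by fun_prop) measurableSet_Icc).2 ?_ <;>
    exact hsqrt.mono fun x hx => ⟨by linarith [hx.1, hx.2], by linarith [hx.1, hx.2]⟩

theorem integral_aeratedBinomialMeasure {μ : Measure ℝ} {φ : ℝ → ℝ} (hφ : Continuous φ)
    (h_plus : Integrable (fun x => φ (1 + √x)) μ) (h_minus : Integrable (fun x => φ (1 - √x)) μ) :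
    ∫ y, φ y ∂aeratedBinomialMeasure μ = ∫ x, (φ (1 + √x) + φ (1 - √x)) / 2 ∂μ := by
  have hm_plus : AEMeasurable (fun x => 1 + √x) μ := by fun_prop
  have hm_minus : AEMeasurable (fun x => 1 - √x) μ := by fun_prop
  rw [aeratedBinomialMeasure, integral_smul_measure,
    integral_add_measure ((integrable_map_measure hφ.aestronglyMeasurable hm_plus).2 h_plus)
      ((integrable_map_measure hφ.aestronglyMeasurable hm_minus).2 h_minus),
    integral_map hm_plus hφ.aestronglyMeasurable, integral_map hm_minus hφ.aestronglyMeasurable,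
    integral_div, integral_add h_plus h_minus]
  simp [div_eq_inv_mul]

theorem integral_pow_aeratedBinomialMeasure {μ : Measure ℝ} [IsFiniteMeasure μ]
    (h : ∀ᵐ x ∂μ, x ∈ Set.Icc 0 1) (n : ℕ) :
    ∫ y, y ^ n ∂aeratedBinomialMeasure μ
      = ∑ k ∈ range (n / 2 + 1), (n.choose (2 * k) : ℝ) * ∫ x, x ^ k ∂μ := by
  have hint {f : ℝ → ℝ} (hf : Continuous f) : Integrable f μ :=
    hf.continuousOn.integrable_of_ae_mem_isCompact isCompact_Icc measurableSet_Icc h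
  rw [integral_aeratedBinomialMeasure (continuous_pow n) (hint (by fun_prop))
    (hint (by fun_prop))]
  simp_rw [← integral_const_mul]
  rw [← integral_finsetSum _ fun k _ => hint (by fun_prop)]
  refine integral_congr_ae (h.mono fun x hx => ?_)
  simp only [← two_mul_sum_range_choose_two_mul_mul_pow, pow_mul, Real.sq_sqrt hx.1]
  exact mul_div_cancel_left₀ _ two_ne_zero

theorem binomial_aerated_hausdorff_isStieltjes_general (a : ℕ → ℝ)
    (ha : ∃ μ : Measure ℝ, IsFiniteMeasure μ ∧ μ (Set.Icc (0 : ℝ) 1)ᶜ = 0 ∧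
      ∀ n : ℕ, a n = ∫ x : ℝ, x ^ n ∂μ) :
    ∃ ν : Measure ℝ, ν (Set.Icc (0 : ℝ) 2)ᶜ = 0 ∧
      (∀ n : ℕ, Integrable (fun x : ℝ => x ^ n) ν) ∧
      ∀ n : ℕ, (∑ k ∈ Finset.range (n / 2 + 1), (n.choose (2 * k) : ℝ) * a k)
        = ∫ x : ℝ, x ^ n ∂ν := by
  obtain ⟨μ, hμ_finite, hμ_supp, hμ_moments⟩ := ha
  have hμ : ∀ᵐ x ∂μ, x ∈ Set.Icc (0 : ℝ) 1 := mem_ae_iff.2 hμ_supp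
  have hν := ae_mem_Icc_aeratedBinomialMeasure hμ
  refine ⟨aeratedBinomialMeasure μ, mem_ae_iff.1 hν, fun n => ?_, fun n => ?_⟩
  · exact (continuous_pow n).continuousOn.integrable_of_ae_mem_isCompact isCompact_Icc
      measurableSet_Icc hν
  · simp_rw [integral_pow_aeratedBinomialMeasure hμ, hμ_moments]

/-- Intermediate step in Wall's theorem: if `a` is a Hausdorff moment sequence with
`a_0 = 1`, then `b_n = ∑_{k : 2k ≤ n} C(n, 2k) a_k` (the 1-binomial transform of the
aerated sequence of `a`) is a Stieltjes moment sequence whose representing measure is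
supported on `[0,2]`. -/
theorem binomial_aerated_hausdorff_isStieltjes (a : ℕ → ℝ)
    (ha : ∃ μ : Measure ℝ, IsFiniteMeasure μ ∧ μ (Set.Icc (0 : ℝ) 1)ᶜ = 0 ∧
      ∀ n : ℕ, a n = ∫ x : ℝ, x ^ n ∂μ)
    (ha0 : a 0 = 1) :
    ∃ ν : Measure ℝ, ν (Set.Icc (0 : ℝ) 2)ᶜ = 0 ∧
      (∀ n : ℕ, Integrable (fun x : ℝ => x ^ n) ν) ∧
      ∀ n : ℕ, (∑ k ∈ Finset.range (n / 2 + 1), (n.choose (2 * k) : ℝ) * a k)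
        = ∫ x : ℝ, x ^ n ∂ν :=
  binomial_aerated_hausdorff_isStieltjes_general a ha
end
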